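/- arXiv:1401.1863 — 5 statements merged into one kernel-verified Lean document; each statement's English description precedes it below -/
import Mathlib

section
/- Let Z : ℝ → ℝ be continuous and 2π-periodic, N, M coprime positive integers, and define Y(η) = (1/N) ∑_{j=0}^{N−1} Z((M/N)(2πj + η)). Then the average energy of Y equals V(0), i.e. (1/(2π)) ∫₀^{2π} Y(η)² dη = (1/N) ∑_{j=0}^{N−1} Q((M/N)·2πj), where Q(φ) = (1/(2π)) ∫₀^{2π} Z(θ+φ) Z(θ) dθ. -/
/-!
Write `S(η) = N · Y(η) = ∑ₖ Z(c(2πk + η))` with `c = M/N`. Since `cN · 2π = M · 2π` is a period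
of `Z`, shifting `η` by `2π` only permutes the terms of `S` cyclically, so `S` is `2π`-periodic.
Hence in `∫₀^{2π} S² = ∑ₖ ∫₀^{2π} S(η) Z(c(2πk + η)) dη` the `k`-th term is the integral of
`S(η) Z(cη)` over `[2πk, 2π(k+1)]`, and the whole sum unfolds to `∫₀^{2πN} S(η) Z(cη) dη`.
Expanding `S` once more, the substitution `θ = cη` turns the `j`-th term into an integral of the
`2π`-periodic correlation integrand `Z(θ + 2πcj) Z(θ)` over `M` full periods.
-/

open MeasureTheory Real Finset Function

theorem Finset.sum_range_succ_eq_sum_range_of_eq {M : Type*} [AddCancelCommMonoid M]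
    {f : ℕ → M} {n : ℕ} (h : f n = f 0) : ∑ i ∈ range n, f (i + 1) = ∑ i ∈ range n, f i :=
  add_right_cancel (b := f 0) <| by rw [← sum_range_succ', sum_range_succ, h]

theorem Function.Periodic.sum_range_comp_mul_add {α : Type*} [AddCancelCommMonoid α]
    {Z : ℝ → α} {c T : ℝ} {n : ℕ} (hZ : Periodic Z (c * (T * n))) :
    Periodic (fun x => ∑ j ∈ range n, Z (c * (T * j + x))) T := by
  intro x
  have hshift : ∀ j : ℕ, c * (T * j + (x + T)) = c * (T * ↑(j + 1) + x) := by
    intro j; push_cast; ring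
  simp only [hshift]
  refine sum_range_succ_eq_sum_range_of_eq (f := fun j : ℕ => Z (c * (T * j + x))) ?_
  simpa [mul_add, add_comm] using hZ (c * x)

theorem intervalIntegral.sum_integral_comp_nat_mul_add {E : Type*} [NormedAddCommGroup E]
    [NormedSpace ℝ E] {F : ℝ → E} (a T : ℝ) (n : ℕ)
    (hF : ∀ t₁ t₂, IntervalIntegrable F volume t₁ t₂) :
    ∑ k ∈ range n, ∫ x in a..a + T, F (T * k + x) = ∫ x in a..a + T * n, F x := by
  have hpiece : ∀ k : ℕ, ∫ x in a..a + T, F (T * k + x)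
      = ∫ x in a + T * k..a + T * ↑(k + 1), F x := by
    intro k
    rw [intervalIntegral.integral_comp_add_left]
    congr 1 <;> push_cast <;> ring
  simp only [hpiece]
  rw [intervalIntegral.sum_integral_adjacent_intervals (a := fun k : ℕ => a + T * k)
    fun k _ => hF _ _]
  simp

theorem Function.Periodic.intervalIntegral_mul_sum_comp_nat_mul_add {g f : ℝ → ℝ} {T : ℝ}
    (hg : Periodic g T) (a : ℝ) (n : ℕ)
    (hgf : ∀ t₁ t₂, IntervalIntegrable (fun x => g x * f x) volume t₁ t₂) :
    ∫ x in a..a + T, g x * ∑ k ∈ range n, f (T * k + x) = ∫ x in a..a + T * n, g x * f x := by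
  have hterm : ∀ k : ℕ,
      (fun x => g x * f (T * k + x)) = fun x => g (T * k + x) * f (T * k + x) := by
    intro k; funext x
    rw [mul_comm T, add_comm _ x, hg.nat_mul k x]
  simp only [mul_sum]
  rw [intervalIntegral.integral_finsetSum fun k _ => ?_]
  · simp only [hterm]
    exact intervalIntegral.sum_integral_comp_nat_mul_add (F := fun x => g x * f x) a T n hgf
  · rw [hterm]
    simpa using (hgf (T * k + a) (T * k + (a + T))).comp_add_left (T * k)

theorem Function.Periodic.intervalIntegral_comp_mul {E : Type*} [NormedAddCommGroup E]
    [NormedSpace ℝ E] {h : ℝ → E} {T c b : ℝ} (hh : Periodic h T)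
    (h_int : ∀ t₁ t₂, IntervalIntegrable h volume t₁ t₂) (hc : c ≠ 0) (m : ℕ)
    (hb : c * b = m * T) :
    ∫ x in 0..b, h (c * x) = c⁻¹ • m • ∫ x in 0..T, h x := by
  have hperiods := hh.intervalIntegral_add_zsmul_eq m 0 h_int
  simp only [zero_add, natCast_zsmul, nsmul_eq_mul] at hperiods
  rw [intervalIntegral.integral_comp_mul_left _ hc, mul_zero, hb, hperiods]

theorem Y_energy_eq_V0_general
    (Z : ℝ → ℝ) (hZ : Continuous Z) (hper : ∀ θ, Z (θ + 2 * π) = Z θ)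
    (N M : ℕ) (hN : 0 < N) (hM : 0 < M)
    (Q Y : ℝ → ℝ)
    (hQ : ∀ φ, Q φ = (1 / (2 * π)) * ∫ θ in (0:ℝ)..(2 * π), Z (θ + φ) * Z θ)
    (hY : ∀ η, Y η = (1 / (N : ℝ)) *
      ∑ j ∈ Finset.range N, Z ((M / (N : ℝ)) * (2 * π * j + η))) :
    (1 / (2 * π)) * ∫ η in (0:ℝ)..(2 * π), (Y η) ^ 2 =
      (1 / (N : ℝ)) * ∑ j ∈ Finset.range N, Q ((M / (N : ℝ)) * (2 * π * j)) := by
  set c : ℝ := M / N with hc_def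
  set S := fun η => ∑ j ∈ range N, Z (c * (2 * π * j + η))
  have hc : c ≠ 0 := by positivity
  have hcN : c * (2 * π * N) = M * (2 * π) := by rw [hc_def]; field_simp
  have hS : Periodic S (2 * π) := Periodic.sum_range_comp_mul_add (hcN ▸ Periodic.nat_mul hper M)
  have energy : ∫ η in (0:ℝ)..(2 * π), S η ^ 2
      = N * ∑ j ∈ range N, ∫ θ in (0:ℝ)..(2 * π), Z (θ + c * (2 * π * j)) * Z θ := calc
    _ = ∫ η in (0:ℝ)..0 + 2 * π, S η * ∑ k ∈ range N, Z (c * (2 * π * k + η)) := by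
      simp only [zero_add, sq]; rfl
    _ = ∫ η in (0:ℝ)..0 + 2 * π * N, S η * Z (c * η) :=
      hS.intervalIntegral_mul_sum_comp_nat_mul_add (f := fun η => Z (c * η)) 0 N
        fun _ _ => Continuous.intervalIntegrable (by fun_prop) _ _
    _ = ∑ j ∈ range N, ∫ η in (0:ℝ)..2 * π * N, Z (c * η + c * (2 * π * j)) * Z (c * η) := by
      simp only [zero_add, S, sum_mul]
      rw [intervalIntegral.integral_finsetSum fun j _ =>
        Continuous.intervalIntegrable (by fun_prop) _ _]
      simp only [mul_add, add_comm]
    _ = ∑ j ∈ range N, c⁻¹ • M • ∫ θ in (0:ℝ)..(2 * π), Z (θ + c * (2 * π * j)) * Z θ :=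
      sum_congr rfl fun j _ => Periodic.intervalIntegral_comp_mul
        (h := fun θ => Z (θ + c * (2 * π * j)) * Z θ) ((Periodic.add_const hper _).mul hper)
        (fun _ _ => Continuous.intervalIntegrable (by fun_prop) _ _) hc M hcN
    _ = _ := by rw [mul_sum]; congr 1; ext j; rw [hc_def, nsmul_eq_mul, smul_eq_mul]; field_simp
  have hY2 : ∀ η, Y η ^ 2 = (1 / (N : ℝ)) ^ 2 * S η ^ 2 := fun η => by rw [hY, mul_pow]
  rw [intervalIntegral.integral_congr fun η _ => hY2 η, intervalIntegral.integral_const_mul,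
    energy]
  simp only [hQ, ← mul_sum]
  field_simp

theorem Y_energy_eq_V0
    (Z : ℝ → ℝ) (hZ : Continuous Z) (hper : ∀ θ, Z (θ + 2 * π) = Z θ)
    (N M : ℕ) (hN : 0 < N) (hM : 0 < M) (hcop : Nat.Coprime N M)
    (Q Y : ℝ → ℝ)
    (hQ : ∀ φ, Q φ = (1 / (2 * π)) * ∫ θ in (0:ℝ)..(2 * π), Z (θ + φ) * Z θ)
    (hY : ∀ η, Y η = (1 / (N : ℝ)) *
      ∑ j ∈ Finset.range N, Z ((M / (N : ℝ)) * (2 * π * j + η))) :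
    (1 / (2 * π)) * ∫ η in (0:ℝ)..(2 * π), (Y η) ^ 2 =
      (1 / (N : ℝ)) * ∑ j ∈ Finset.range N, Q ((M / (N : ℝ)) * (2 * π * j)) :=
  Y_energy_eq_V0_general Z hZ hper N M hN hM Q Y hQ hY
end

section
/- Let Z : ℝ → ℝ be continuous and 2π-periodic, N, M coprime positive integers, Y(η,ψ) = (1/N) ∑_{j=0}^{N−1} Z((M/N)(2πj+η)+ψ), and Q the autocorrelation of Z. Then for all φ, ψ: (1/(2π)) ∫₀^{2π} Z(Mθ + φ) · Y(Nθ, ψ) dθ = (1/N) ∑_{j=0}^{N−1} Q((M/N)·2πj + φ − ψ). -/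
/-!
Inserting the definition of `Y`, the integrand is the average over `j` of
`Z (M θ + φ) * Z (M θ + ψ + 2π M j / N)`. As `Z` is `2π`-periodic, the substitution
`θ ↦ M θ` runs over exactly `M` periods, so the mean of each term is the autocorrelation
`Q (φ - ψ - 2π M j / N)`. Finally the shifts `-2π M j / N` and `2π M j / N` agree, as a family,
modulo the period `2π M` of `Q`.
-/

open MeasureTheory Real Finset

namespace Function.Periodic

theorem intervalIntegral_comp_natCast_mul_add {E : Type*} [NormedAddCommGroup E]
    [NormedSpace ℝ E] {f : ℝ → E} {T : ℝ} (hf : Periodic f T)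
    (h_int : ∀ t₁ t₂, IntervalIntegrable f volume t₁ t₂) {n : ℕ} (hn : n ≠ 0) (b : ℝ) :
    ∫ x in 0..T, f (n * x + b) = ∫ x in 0..T, f x := by
  have hn' : (n : ℝ) ≠ 0 := Nat.cast_ne_zero.mpr hn
  have hnT : (n : ℝ) * T + b = b + (n : ℤ) • T := by
    rw [zsmul_eq_mul]; push_cast; ring
  rw [intervalIntegral.integral_comp_mul_add _ hn', mul_zero, zero_add, hnT,
    hf.intervalIntegral_add_zsmul_eq _ _ h_int, hf.intervalIntegral_add_eq b 0, zero_add,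
    ← Int.cast_smul_eq_zsmul ℝ, Int.cast_natCast, inv_smul_smul₀ hn']

theorem sum_range_sub_eq_sum_range_add {M : Type*} [AddCommMonoid M] {f : ℝ → M} {T : ℝ}
    (hf : Periodic f T) (N : ℕ) (x : ℝ) :
    ∑ j ∈ range N, f (x - j * T / N) = ∑ j ∈ range N, f (x + j * T / N) := by
  cases N with
  | zero => simp
  | succ n =>
    have hN : ((n + 1 : ℕ) : ℝ) ≠ 0 := Nat.cast_ne_zero.mpr n.succ_ne_zero
    calc ∑ j ∈ range (n + 1), f (x - j * T / ↑(n + 1))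
        = ∑ j ∈ range (n + 1), f (x - ↑(n + 1 - 1 - j) * T / ↑(n + 1)) :=
          (sum_range_reflect _ _).symm
      _ = ∑ j ∈ range (n + 1), f (x + ↑(j + 1) * T / ↑(n + 1)) := by
          refine sum_congr rfl fun j hj => ?_
          have hjn : j ≤ n := Nat.lt_succ_iff.mp (mem_range.mp hj)
          rw [Nat.add_sub_cancel, Nat.cast_sub hjn, ← hf.sub_eq (x + _)]
          congr 1
          field_simp
          push_cast
          ring
      _ = ∑ j ∈ range (n + 1), f (x + j * T / ↑(n + 1)) := by
          rw [sum_range_succ, sum_range_succ' _ n, mul_div_cancel_left₀ _ hN, hf x]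
          simp only [Nat.cast_zero, zero_mul, zero_div, add_zero]

theorem intervalIntegral_mul_comp_natCast_mul_add {Z : ℝ → ℝ} {T : ℝ} (hZ : Periodic Z T)
    (hZc : Continuous Z) {n : ℕ} (hn : n ≠ 0) (a b : ℝ) :
    ∫ x in 0..T, Z (n * x + a) * Z (n * x + b) = ∫ x in 0..T, Z (x + (a - b)) * Z x := by
  have hg : Periodic (fun x => Z (x + (a - b)) * Z x) T := (hZ.add_const _).mul hZ
  rw [← hg.intervalIntegral_comp_natCast_mul_add
    (fun _ _ => (by fun_prop : Continuous _).intervalIntegrable _ _) hn b]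
  simp only [add_add_sub_cancel]

end Function.Periodic

theorem interaction_with_Y_eq_V_general
    (Z : ℝ → ℝ) (hZ : Continuous Z) (hper : ∀ θ, Z (θ + 2 * π) = Z θ)
    (N M : ℕ) (hN : 0 < N) (hM : 0 < M)
    (Q : ℝ → ℝ)
    (hQ : ∀ φ, Q φ = (1 / (2 * π)) * ∫ θ in (0:ℝ)..(2 * π), Z (θ + φ) * Z θ)
    (Y : ℝ → ℝ → ℝ)
    (hY : ∀ η ψ, Y η ψ = (1 / (N : ℝ)) *
      ∑ j ∈ Finset.range N, Z ((M / (N : ℝ)) * (2 * π * j + η) + ψ)) :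
    ∀ φ ψ, (1 / (2 * π)) * ∫ θ in (0:ℝ)..(2 * π), Z (M * θ + φ) * Y (N * θ) ψ =
      (1 / (N : ℝ)) * ∑ j ∈ Finset.range N, Q ((M / (N : ℝ)) * (2 * π * j) + φ - ψ) := by
  intro φ ψ
  have hZper : Function.Periodic Z (2 * π) := hper
  have hQper : Function.Periodic Q (M * (2 * π)) := by
    refine Function.Periodic.nat_mul (fun x => ?_) M
    simp only [hQ, ← add_assoc, hper]
  have hNR : (N : ℝ) ≠ 0 := Nat.cast_ne_zero.mpr hN.ne'
  have hintegrand : ∀ θ, Z (M * θ + φ) * Y (N * θ) ψ = (1 / (N : ℝ)) *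
      ∑ j ∈ range N, Z (M * θ + φ) * Z (M * θ + (ψ + j * (M * (2 * π)) / N)) := by
    intro θ
    rw [hY, mul_left_comm, mul_sum]
    congr 2 with j
    congr 2
    field_simp
    ring
  have hmean : ∀ a, ∫ θ in (0:ℝ)..(2 * π), Z (M * θ + φ) * Z (M * θ + a) =
      2 * π * Q (φ - a) := by
    intro a
    rw [hZper.intervalIntegral_mul_comp_natCast_mul_add hZ hM.ne', hQ]
    field_simp
  simp_rw [hintegrand, intervalIntegral.integral_const_mul]
  rw [intervalIntegral.integral_finsetSum fun j _ =>
    (by fun_prop : Continuous _).intervalIntegrable _ _]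
  have hreindex : ∑ j ∈ range N, Q (M / (N : ℝ) * (2 * π * j) + φ - ψ) =
      ∑ j ∈ range N, Q (φ - ψ + j * (M * (2 * π)) / N) :=
    sum_congr rfl fun j _ => by ring_nf
  simp_rw [hmean, ← mul_sum, hreindex, ← hQper.sum_range_sub_eq_sum_range_add,
    sub_add_eq_sub_sub]
  rw [mul_left_comm, one_div (2 * π), inv_mul_cancel_left₀ two_pi_pos.ne']

theorem interaction_with_Y_eq_V
    (Z : ℝ → ℝ) (hZ : Continuous Z) (hper : ∀ θ, Z (θ + 2 * π) = Z θ)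
    (N M : ℕ) (hN : 0 < N) (hM : 0 < M) (hcop : Nat.Coprime N M)
    (Q : ℝ → ℝ)
    (hQ : ∀ φ, Q φ = (1 / (2 * π)) * ∫ θ in (0:ℝ)..(2 * π), Z (θ + φ) * Z θ)
    (Y : ℝ → ℝ → ℝ)
    (hY : ∀ η ψ, Y η ψ = (1 / (N : ℝ)) *
      ∑ j ∈ Finset.range N, Z ((M / (N : ℝ)) * (2 * π * j + η) + ψ)) :
    ∀ φ ψ, (1 / (2 * π)) * ∫ θ in (0:ℝ)..(2 * π), Z (M * θ + φ) * Y (N * θ) ψ =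
      (1 / (N : ℝ)) * ∑ j ∈ Finset.range N, Q ((M / (N : ℝ)) * (2 * π * j) + φ - ψ) :=
  interaction_with_Y_eq_V_general Z hZ hper N M hN hM Q hQ Y hY
end

section
/- Let Z : ℝ → ℝ be continuous and 2π-periodic, N, M coprime positive integers, Δω a real number with V₀ := (1/(2π))∫₀^{2π} Y(η)² dη > 0, where Y(η) = (1/N) ∑_{j=0}^{N−1} Z((M/N)(2πj+η)). Define v_m(η) = −(Δω/V₀)·Y(η). Then the interaction function of v_m satisfies Λ_{v_m}(0) = −Δω, i.e. Δω + (1/(2π)) ∫₀^{2π} Z(Mθ) v_m(Nθ) dθ = 0. -/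
open MeasureTheory Real Finset Function

/-!
With `g θ = Z (M θ)`, `Y (N θ)` is the average `P θ` of the translates of `g` by the multiples
of `2π / N`. Since `P` is `2π / N`-periodic, shifting the integration variable turns each
`∫ g (θ + 2πj / N) P θ dθ` into `∫ g P`, so `∫ g P = ∫ P²`; and `∫ P² = ∫ Y²` because `Y` is
`2π`-periodic. Hence the interaction integral of `v_m` is `-(Δω / V₀) · 2π V₀`.
-/

noncomputable def shiftAverage (g : ℝ → ℝ) (T : ℝ) (N : ℕ) (θ : ℝ) : ℝ :=
  (N : ℝ)⁻¹ * ∑ j ∈ range N, g (θ + j * (T / N))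

theorem continuous_shiftAverage {g : ℝ → ℝ} (hg : Continuous g) (T : ℝ) (N : ℕ) :
    Continuous (shiftAverage g T N) := by
  unfold shiftAverage
  fun_prop

theorem Function.Periodic.shiftAverage {g : ℝ → ℝ} {T : ℝ} (hg : Periodic g T) {N : ℕ}
    (hN : N ≠ 0) : Periodic (shiftAverage g T N) (T / N) := by
  intro θ
  set t : ℕ → ℝ := fun j => g (θ + j * (T / N))
  have hshift : ∀ j : ℕ, g (θ + T / N + j * (T / N)) = t (j + 1) := fun j => by
    simp only [t]; push_cast; ring_nf
  have hNT : (N : ℝ) * (T / N) = T := mul_div_cancel₀ T (Nat.cast_ne_zero.mpr hN)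
  have hwrap : t N = t 0 := by simpa [t, hNT] using hg θ
  have hsucc' := sum_range_succ' t N
  have hsucc := sum_range_succ t N
  simp only [_root_.shiftAverage, hshift]
  congr 1
  linarith

theorem Function.Periodic.intervalIntegral_comp_add_mul {u v : ℝ → ℝ} {T : ℝ}
    (hu : Periodic u T) (hv : Periodic v T) (s : ℝ) :
    ∫ θ in 0..T, u (θ + s) * v θ = ∫ θ in 0..T, u θ * v (θ - s) := by
  have hper : Periodic (fun θ => u θ * v (θ - s)) T := hu.mul (hv.sub_const s)
  calc ∫ θ in 0..T, u (θ + s) * v θ = ∫ θ in 0..T, u (θ + s) * v (θ + s - s) := by simp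
    _ = ∫ θ in s..s + T, u θ * v (θ - s) := by
      rw [intervalIntegral.integral_comp_add_right (fun θ => u θ * v (θ - s)), zero_add, add_comm]
    _ = ∫ θ in 0..T, u θ * v (θ - s) := by simpa using hper.intervalIntegral_add_eq s 0

theorem integral_mul_shiftAverage_eq_integral_sq {g : ℝ → ℝ} {T : ℝ} (hgc : Continuous g)
    (hg : Periodic g T) {N : ℕ} (hN : N ≠ 0) :
    ∫ θ in 0..T, g θ * shiftAverage g T N θ = ∫ θ in 0..T, shiftAverage g T N θ ^ 2 := by
  set P := shiftAverage g T N
  have hP : Periodic P (T / N) := hg.shiftAverage hN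
  have hPT : Periodic P T := by
    simpa [mul_div_cancel₀ T (Nat.cast_ne_zero.mpr hN)] using hP.nat_mul N
  have hPc : Continuous P := continuous_shiftAverage hgc T N
  have hterm : ∀ j : ℕ, ∫ θ in 0..T, g (θ + j * (T / N)) * P θ = ∫ θ in 0..T, g θ * P θ :=
    fun j => by simp_rw [hg.intervalIntegral_comp_add_mul hPT, hP.sub_nat_mul_eq]
  symm
  calc ∫ θ in 0..T, P θ ^ 2
      = ∫ θ in 0..T, (N : ℝ)⁻¹ * ∑ j ∈ range N, g (θ + j * (T / N)) * P θ := by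
        congr 1; ext θ
        rw [sq, show P θ * P θ = shiftAverage g T N θ * P θ from rfl, shiftAverage, mul_assoc,
          sum_mul]
    _ = (N : ℝ)⁻¹ * ∑ j ∈ range N, ∫ θ in 0..T, g (θ + j * (T / N)) * P θ := by
        rw [intervalIntegral.integral_const_mul, intervalIntegral.integral_finsetSum]
        exact fun j _ => (by fun_prop : Continuous _).intervalIntegrable _ _
    _ = ∫ θ in 0..T, g θ * P θ := by simp [hterm, hN]

theorem Function.Periodic.intervalIntegral_comp_nat_mul {f : ℝ → ℝ} {T : ℝ} (hf : Periodic f T)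
    (h_int : ∀ t₁ t₂, IntervalIntegrable f volume t₁ t₂) {N : ℕ} (hN : N ≠ 0) :
    ∫ θ in 0..T, f (N * θ) = ∫ θ in 0..T, f θ := by
  have hNT : (N : ℝ) * T = 0 + (N : ℤ) • T := by simp
  rw [intervalIntegral.integral_comp_mul_left _ (Nat.cast_ne_zero.mpr hN), mul_zero, hNT,
    hf.intervalIntegral_add_zsmul_eq _ _ h_int, zero_add]
  simp [hN]

theorem min_energy_waveform_satisfies_constraint_general
    (Z : ℝ → ℝ) (hZ : Continuous Z) (hper : ∀ θ, Z (θ + 2 * π) = Z θ)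
    (N M : ℕ) (hN : 0 < N)
    (Δω : ℝ) (Y : ℝ → ℝ)
    (hY : ∀ η, Y η = (1 / (N : ℝ)) *
      ∑ j ∈ Finset.range N, Z ((M / (N : ℝ)) * (2 * π * j + η)))
    (V₀ : ℝ) (hV₀ : V₀ = (1 / (2 * π)) * ∫ η in (0:ℝ)..(2 * π), (Y η) ^ 2)
    (hV₀pos : 0 < V₀)
    (vm : ℝ → ℝ) (hvm : ∀ η, vm η = -(Δω / V₀) * Y η) :
    Δω + (1 / (2 * π)) * ∫ θ in (0:ℝ)..(2 * π), Z (M * θ) * vm (N * θ) = 0 := by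
  have hNR : (N : ℝ) ≠ 0 := Nat.cast_ne_zero.mpr hN.ne'
  set g : ℝ → ℝ := fun θ => Z (M * θ)
  have hg : Periodic g (2 * π) := by
    intro θ
    simpa only [g, mul_add] using Periodic.nat_mul hper M (M * θ)
  have hYP : ∀ θ, Y (N * θ) = shiftAverage g (2 * π) N θ := fun θ => by
    rw [hY, shiftAverage, one_div]
    congr 1
    refine sum_congr rfl fun j _ => congrArg Z ?_
    field_simp
    ring
  have hYeq : Y = fun η => shiftAverage g (2 * π) N (η / N) := by
    ext η; rw [← hYP, mul_div_cancel₀ _ hNR]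
  have hYper : Periodic Y (2 * π) := by
    simpa [hYeq, div_mul_cancel₀ _ hNR] using (hg.shiftAverage hN.ne').div_const (N : ℝ)
  have hYc : Continuous Y := by
    rw [hYeq]; exact (continuous_shiftAverage (by fun_prop) _ _).comp (by fun_prop)
  have hinteraction : ∫ θ in 0..2 * π, Z (M * θ) * vm (N * θ) = -(Δω / V₀) * (2 * π * V₀) := by
    calc ∫ θ in 0..2 * π, Z (M * θ) * vm (N * θ)
        = -(Δω / V₀) * ∫ θ in 0..2 * π, g θ * shiftAverage g (2 * π) N θ := by
          rw [← intervalIntegral.integral_const_mul]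
          congr 1; ext θ; rw [hvm, hYP]; ring
      _ = -(Δω / V₀) * ∫ θ in 0..2 * π, Y (N * θ) ^ 2 := by
          simp_rw [integral_mul_shiftAverage_eq_integral_sq (by fun_prop) hg hN.ne', hYP]
      _ = -(Δω / V₀) * (2 * π * V₀) := by
          have hY2 : Periodic (fun η => Y η ^ 2) (2 * π) := fun η => by
            simp only [hYper η]
          rw [hY2.intervalIntegral_comp_nat_mul
            (fun _ _ => (by fun_prop : Continuous fun η => Y η ^ 2).intervalIntegrable _ _) hN.ne',
            hV₀]
          field_simp
  rw [hinteraction]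
  field_simp
  ring

theorem min_energy_waveform_satisfies_constraint
    (Z : ℝ → ℝ) (hZ : Continuous Z) (hper : ∀ θ, Z (θ + 2 * π) = Z θ)
    (N M : ℕ) (hN : 0 < N) (hM : 0 < M) (hcop : Nat.Coprime N M)
    (Δω : ℝ) (Y : ℝ → ℝ)
    (hY : ∀ η, Y η = (1 / (N : ℝ)) *
      ∑ j ∈ Finset.range N, Z ((M / (N : ℝ)) * (2 * π * j + η)))
    (V₀ : ℝ) (hV₀ : V₀ = (1 / (2 * π)) * ∫ η in (0:ℝ)..(2 * π), (Y η) ^ 2)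
    (hV₀pos : 0 < V₀)
    (vm : ℝ → ℝ) (hvm : ∀ η, vm η = -(Δω / V₀) * Y η) :
    Δω + (1 / (2 * π)) * ∫ θ in (0:ℝ)..(2 * π), Z (M * θ) * vm (N * θ) = 0 :=
  min_energy_waveform_satisfies_constraint_general Z hZ hper N M hN Δω Y hY V₀ hV₀ hV₀pos vm hvm
end

section
/- Let Y, W : ℝ → ℝ be continuous 2π-periodic functions with ⟨Y, W⟩ = 0, ⟨Y,Y⟩ = V₀ > 0, and ⟨W,W⟩ = S₀ > 0, where ⟨f,g⟩ = (1/(2π))∫₀^{2π} f g. Let P > (Δω)²/V₀. Then the function v_f = (1/(2λ))·W − (Δω/V₀)·Y with λ = −(1/2)·√(S₀/(P − (Δω)²/V₀)) satisfies the constraints ⟨v_f, v_f⟩ = P and ⟨Y, v_f⟩ = −Δω, and among all v satisfying these two constraints it minimizes ⟨W, v⟩ (equivalently maximizes −⟨W, v⟩), with optimal value ⟨W, v_f⟩ = (1/(2λ))·S₀ = −√(S₀(P − (Δω)²/V₀)). -/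
/-!
Adding `(Δω / V₀) Y` to `v` removes its component along `Y` and leaves `⟨W, v⟩` unchanged, because
`W ⟂ Y`; the result `u` satisfies `⟨u, u⟩ = P - Δω² / V₀`. Cauchy–Schwarz for the positive semidefinite
form `⟨·, ·⟩` then gives `⟨W, v⟩ = ⟨W, u⟩ ≥ -√(S₀ (P - Δω² / V₀))`, and `v_f` attains this bound.
-/

open MeasureTheory Real

namespace LinearMap.BilinForm

variable {M : Type*} [AddCommGroup M] [Module ℝ M] (B : LinearMap.BilinForm ℝ M)

theorem neg_sqrt_le_apply_of_apply_eq_zero (hB : LinearMap.IsPosSemidef B) {Y W : M}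
    (hYW : B Y W = 0) (v : M) :
    -√(B W W * (B v v - B Y v ^ 2 / B Y Y)) ≤ B W v := by
  have hsymm (x y : M) : B x y = B y x := hB.isSymm.eq x y
  set u := v - (B Y v / B Y Y) • Y
  have hWu : B W u = B W v := by simp [u, hsymm W Y, hYW]
  have huu : B u u = B v v - B Y v ^ 2 / B Y Y := by
    rcases eq_or_ne (B Y Y) 0 with h0 | h0
    · simp [u, h0]
    · simp only [u, map_sub, map_smul, LinearMap.sub_apply, LinearMap.smul_apply, smul_eq_mul,
        hsymm v Y]
      field_simp
      ring
  rw [← hWu, ← huu]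
  exact neg_le_of_abs_le (abs_le_sqrt (B.apply_sq_le_of_symm hB.nonneg hB.isSymm W u))

end LinearMap.BilinForm

theorem ContinuousMap.intervalIntegrable_mul (f g : C(ℝ, ℝ)) (a b : ℝ) :
    IntervalIntegrable (fun θ => f θ * g θ) volume a b :=
  (f.continuous.mul g.continuous).intervalIntegrable a b

open ContinuousMap in
noncomputable def periodMeanForm : LinearMap.BilinForm ℝ C(ℝ, ℝ) :=
  LinearMap.mk₂ ℝ (fun f g => (1 / (2 * π)) * ∫ θ in (0:ℝ)..(2 * π), f θ * g θ)
    (fun f₁ f₂ g => by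
      simp only [ContinuousMap.add_apply, add_mul]
      rw [intervalIntegral.integral_add (intervalIntegrable_mul f₁ g _ _)
        (intervalIntegrable_mul f₂ g _ _), mul_add])
    (fun a f g => by
      simp only [ContinuousMap.smul_apply, smul_eq_mul, mul_assoc]
      rw [intervalIntegral.integral_const_mul, mul_left_comm])
    (fun f g₁ g₂ => by
      simp only [ContinuousMap.add_apply, mul_add]
      rw [intervalIntegral.integral_add (intervalIntegrable_mul f g₁ _ _)
        (intervalIntegrable_mul f g₂ _ _), mul_add])
    (fun a f g => by
      simp only [ContinuousMap.smul_apply, smul_eq_mul, mul_left_comm _ a]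
      rw [intervalIntegral.integral_const_mul, mul_left_comm])

theorem periodMeanForm_apply (f g : C(ℝ, ℝ)) :
    periodMeanForm f g = (1 / (2 * π)) * ∫ θ in (0:ℝ)..(2 * π), f θ * g θ := rfl

theorem periodMeanForm_isPosSemidef : LinearMap.IsPosSemidef periodMeanForm where
  eq f g := by simp only [periodMeanForm_apply, RingHom.id_apply, mul_comm (f _)]
  nonneg f := mul_nonneg (by positivity)
    (intervalIntegral.integral_nonneg (by positivity) fun θ _ => mul_self_nonneg (f θ))

theorem inv_sqrt_div_mul_self {S Q : ℝ} (hS : 0 < S) (hQ : 0 ≤ Q) :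
    (√(S / Q))⁻¹ * S = √(S * Q) := by
  rw [← sqrt_inv, inv_div, ← sqrt_sq hS.le, ← sqrt_mul (by positivity), sqrt_sq hS.le]
  congr 1
  field_simp

theorem inv_sqrt_div_sq_mul_self {S Q : ℝ} (hS : 0 < S) (hQ : 0 ≤ Q) :
    (√(S / Q))⁻¹ ^ 2 * S = Q := by
  rw [inv_pow, sq_sqrt (by positivity)]
  field_simp

theorem fast_entrainment_optimality_general
    (Y W : ℝ → ℝ) (hY : Continuous Y) (hW : Continuous W)
    (V₀ S₀ Δω P : ℝ)
    (horth : (1 / (2 * π)) * ∫ θ in (0:ℝ)..(2 * π), Y θ * W θ = 0)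
    (hV₀ : (1 / (2 * π)) * ∫ θ in (0:ℝ)..(2 * π), Y θ * Y θ = V₀)
    (hS₀ : (1 / (2 * π)) * ∫ θ in (0:ℝ)..(2 * π), W θ * W θ = S₀)
    (hV₀pos : 0 < V₀) (hS₀pos : 0 < S₀)
    (hP : Δω ^ 2 / V₀ < P)
    (lam : ℝ) (hlam2 : lam = -(1 / 2) * Real.sqrt (S₀ / (P - Δω ^ 2 / V₀)))
    (vf : ℝ → ℝ) (hvf : ∀ θ, vf θ = (1 / (2 * lam)) * W θ - (Δω / V₀) * Y θ) :
    ((1 / (2 * π)) * ∫ θ in (0:ℝ)..(2 * π), vf θ * vf θ = P) ∧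
    ((1 / (2 * π)) * ∫ θ in (0:ℝ)..(2 * π), Y θ * vf θ = -Δω) ∧
    ((1 / (2 * π)) * ∫ θ in (0:ℝ)..(2 * π), W θ * vf θ = (1 / (2 * lam)) * S₀) ∧
    ((1 / (2 * lam)) * S₀ = -Real.sqrt (S₀ * (P - Δω ^ 2 / V₀))) ∧
    (∀ v : ℝ → ℝ, Continuous v → (∀ θ, v (θ + 2 * π) = v θ) →
      ((1 / (2 * π)) * ∫ θ in (0:ℝ)..(2 * π), v θ * v θ = P) →
      ((1 / (2 * π)) * ∫ θ in (0:ℝ)..(2 * π), Y θ * v θ = -Δω) →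
      (1 / (2 * π)) * ∫ θ in (0:ℝ)..(2 * π), W θ * vf θ ≤
        (1 / (2 * π)) * ∫ θ in (0:ℝ)..(2 * π), W θ * v θ) := by
  set B := periodMeanForm
  set Q := P - Δω ^ 2 / V₀
  have hQ : 0 ≤ Q := (sub_pos.mpr hP).le
  have hc : 1 / (2 * lam) = -(√(S₀ / Q))⁻¹ := by rw [hlam2]; ring
  let Yc : C(ℝ, ℝ) := ⟨Y, hY⟩
  let Wc : C(ℝ, ℝ) := ⟨W, hW⟩
  obtain rfl : vf = ⇑((1 / (2 * lam)) • Wc - (Δω / V₀) • Yc) := funext hvf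
  change B Yc Wc = 0 at horth
  change B Yc Yc = V₀ at hV₀
  change B Wc Wc = S₀ at hS₀
  have hWY : B Wc Yc = 0 := by rw [← periodMeanForm_isPosSemidef.isSymm.eq]; exact horth
  have hWvf : B Wc ((1 / (2 * lam)) • Wc - (Δω / V₀) • Yc) = 1 / (2 * lam) * S₀ := by
    simp [hWY, hS₀]
  have hvalue : 1 / (2 * lam) * S₀ = -√(S₀ * Q) := by
    rw [hc, neg_mul, inv_sqrt_div_mul_self hS₀pos hQ]
  refine ⟨?_, ?_, hWvf, hvalue, fun v hv _ hvP hvY => ?_⟩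
  · change B (_ • Wc - _ • Yc) _ = P
    have hc2 : (1 / (2 * lam)) ^ 2 * S₀ = Q := by
      rw [hc, neg_sq, inv_sqrt_div_sq_mul_self hS₀pos hQ]
    have hd2 : (Δω / V₀) ^ 2 * V₀ = Δω ^ 2 / V₀ := by field_simp
    simp only [map_sub, map_smul, LinearMap.sub_apply, LinearMap.smul_apply, smul_eq_mul, horth,
      hWY, hV₀, hS₀]
    linear_combination hc2 + hd2
  · change B Yc _ = -Δω
    simp only [map_sub, map_smul, smul_eq_mul, horth, hV₀, mul_zero, zero_sub]
    field_simp
  · change B Wc _ ≤ B Wc ⟨v, hv⟩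
    change B ⟨v, hv⟩ ⟨v, hv⟩ = P at hvP
    change B Yc ⟨v, hv⟩ = -Δω at hvY
    rw [hWvf, hvalue]
    simpa only [hvP, hvY, hV₀, hS₀, neg_sq] using
      LinearMap.BilinForm.neg_sqrt_le_apply_of_apply_eq_zero B periodMeanForm_isPosSemidef
        horth ⟨v, hv⟩

theorem fast_entrainment_optimality
    (Y W : ℝ → ℝ) (hY : Continuous Y) (hW : Continuous W)
    (hYper : ∀ θ, Y (θ + 2 * π) = Y θ) (hWper : ∀ θ, W (θ + 2 * π) = W θ)
    (V₀ S₀ Δω P : ℝ)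
    (horth : (1 / (2 * π)) * ∫ θ in (0:ℝ)..(2 * π), Y θ * W θ = 0)
    (hV₀ : (1 / (2 * π)) * ∫ θ in (0:ℝ)..(2 * π), Y θ * Y θ = V₀)
    (hS₀ : (1 / (2 * π)) * ∫ θ in (0:ℝ)..(2 * π), W θ * W θ = S₀)
    (hV₀pos : 0 < V₀) (hS₀pos : 0 < S₀)
    (hP : Δω ^ 2 / V₀ < P)
    (lam : ℝ) (hlam2 : lam = -(1 / 2) * Real.sqrt (S₀ / (P - Δω ^ 2 / V₀)))
    (vf : ℝ → ℝ) (hvf : ∀ θ, vf θ = (1 / (2 * lam)) * W θ - (Δω / V₀) * Y θ) :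
    ((1 / (2 * π)) * ∫ θ in (0:ℝ)..(2 * π), vf θ * vf θ = P) ∧
    ((1 / (2 * π)) * ∫ θ in (0:ℝ)..(2 * π), Y θ * vf θ = -Δω) ∧
    ((1 / (2 * π)) * ∫ θ in (0:ℝ)..(2 * π), W θ * vf θ = (1 / (2 * lam)) * S₀) ∧
    ((1 / (2 * lam)) * S₀ = -Real.sqrt (S₀ * (P - Δω ^ 2 / V₀))) ∧
    (∀ v : ℝ → ℝ, Continuous v → (∀ θ, v (θ + 2 * π) = v θ) →
      ((1 / (2 * π)) * ∫ θ in (0:ℝ)..(2 * π), v θ * v θ = P) →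
      ((1 / (2 * π)) * ∫ θ in (0:ℝ)..(2 * π), Y θ * v θ = -Δω) →
      (1 / (2 * π)) * ∫ θ in (0:ℝ)..(2 * π), W θ * vf θ ≤
        (1 / (2 * π)) * ∫ θ in (0:ℝ)..(2 * π), W θ * v θ) :=
  fast_entrainment_optimality_general Y W hY hW V₀ S₀ Δω P horth hV₀ hS₀ hV₀pos hS₀pos hP lam hlam2
    vf hvf
end

section
/- Let V₀ > V_* > 0 and Δω₁ < Δω₂ be real numbers satisfying V₀Δω₁ − V_*Δω₂ < 0 and V₀Δω₂ − V_*Δω₁ > 0. Define J(β) = [ (Δω₁V₀ − Δω₂β)² + (Δω₁β − Δω₂V₀)² ]·V₀/((V₀−β)²(V₀+β)²) − 2(Δω₁V₀ − Δω₂β)(Δω₁β − Δω₂V₀)β/((V₀−β)²(V₀+β)²) for β ∈ [V_*, V₀). Then J is strictly increasing on [V_*, V₀); in particular J attains its minimum on [V_*, V₀) at β = V_*. -/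
theorem ensemble_cost_monotone
    (V₀ Vs Δω₁ Δω₂ : ℝ)
    (hVs : 0 < Vs) (hV : Vs < V₀) (hΔ : Δω₁ < Δω₂)
    (h1 : V₀ * Δω₁ - Vs * Δω₂ < 0) (h2 : 0 < V₀ * Δω₂ - Vs * Δω₁)
    (J : ℝ → ℝ)
    (hJ : ∀ β, J β =
      ((Δω₁ * V₀ - Δω₂ * β) ^ 2 + (Δω₁ * β - Δω₂ * V₀) ^ 2) * V₀ /
        ((V₀ - β) ^ 2 * (V₀ + β) ^ 2) -
      2 * (Δω₁ * V₀ - Δω₂ * β) * (Δω₁ * β - Δω₂ * V₀) * β /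
        ((V₀ - β) ^ 2 * (V₀ + β) ^ 2)) :
    (∀ β₁ β₂, Vs ≤ β₁ → β₁ < β₂ → β₂ < V₀ → J β₁ < J β₂) ∧
    (∀ β, Vs ≤ β → β < V₀ → J Vs ≤ J β) := by
  have hVpos : 0 < V₀ := hVs.trans hV
  have hVVs : 0 < V₀ - Vs := by linarith
  have hA : ∀ β, Vs ≤ β → β < V₀ → Δω₁ * V₀ - Δω₂ * β < 0 := by
    intro β hb hb'
    nlinarith [mul_neg_of_pos_of_neg (sub_pos.mpr hb') h1,
      mul_nonneg (sub_nonneg.mpr hb) (mul_nonneg hVpos.le (sub_nonneg.mpr hΔ.le))]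
  have hB : ∀ β, Vs ≤ β → β < V₀ → Δω₁ * β - Δω₂ * V₀ < 0 := by
    intro β hb hb'
    nlinarith [mul_pos (sub_pos.mpr hb') h2,
      mul_nonneg (sub_nonneg.mpr hb) (mul_nonneg hVpos.le (sub_nonneg.mpr hΔ.le))]
  have hform : ∀ β, Vs ≤ β → β < V₀ →
      J β = (Δω₁ - Δω₂) ^ 2 / (2 * (V₀ - β)) + (Δω₁ + Δω₂) ^ 2 / (2 * (V₀ + β)) := by
    intro β hb hb'
    have hm : (0:ℝ) < V₀ - β := by linarith
    have hp : (0:ℝ) < V₀ + β := by linarith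
    rw [hJ]
    field_simp
    ring
  have key : ∀ β₁ β₂, Vs ≤ β₁ → β₁ < β₂ → β₂ < V₀ → J β₁ < J β₂ := by
    intro β₁ β₂ hb1 h12 hb2
    have hb1' : β₁ < V₀ := h12.trans hb2
    have hb2' : Vs ≤ β₂ := hb1.trans h12.le
    rw [hform β₁ hb1 hb1', hform β₂ hb2' hb2]
    have hm1 : (0:ℝ) < V₀ - β₁ := by linarith
    have hm2 : (0:ℝ) < V₀ - β₂ := by linarith
    have hp1 : (0:ℝ) < V₀ + β₁ := by linarith
    have hp2 : (0:ℝ) < V₀ + β₂ := by linarith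
    have hA1 := hA β₁ hb1 hb1'
    have hA2 := hA β₂ hb2' hb2
    have hB1 := hB β₁ hb1 hb1'
    have hB2 := hB β₂ hb2' hb2
    have hnum : 0 < (β₂ - β₁) * (2 * ((Δω₁ * β₁ - Δω₂ * V₀) * (Δω₁ * V₀ - Δω₂ * β₂) +
        (Δω₁ * V₀ - Δω₂ * β₁) * (Δω₁ * β₂ - Δω₂ * V₀))) := by
      have := mul_pos_of_neg_of_neg hB1 hA2
      have := mul_pos_of_neg_of_neg hA1 hB2
      nlinarith
    have hden : (0:ℝ) < 2 * (V₀ - β₁) * (V₀ - β₂) * (V₀ + β₁) * (V₀ + β₂) := by positivity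
    have hdiff :
        ((Δω₁ - Δω₂) ^ 2 / (2 * (V₀ - β₂)) + (Δω₁ + Δω₂) ^ 2 / (2 * (V₀ + β₂))) -
        ((Δω₁ - Δω₂) ^ 2 / (2 * (V₀ - β₁)) + (Δω₁ + Δω₂) ^ 2 / (2 * (V₀ + β₁))) =
        (β₂ - β₁) * (2 * ((Δω₁ * β₁ - Δω₂ * V₀) * (Δω₁ * V₀ - Δω₂ * β₂) +
          (Δω₁ * V₀ - Δω₂ * β₁) * (Δω₁ * β₂ - Δω₂ * V₀))) /
        (2 * (V₀ - β₁) * (V₀ - β₂) * (V₀ + β₁) * (V₀ + β₂)) := by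
      field_simp
      ring
    have := div_pos hnum hden
    linarith [hdiff ▸ this]
  refine ⟨key, ?_⟩
  intro β hb hb'
  rcases eq_or_lt_of_le hb with h | h
  · rw [h]
  · exact (key Vs β le_rfl h hb').le
end
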